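/- arXiv:1606.01115 — 11 statements merged into one kernel-verified Lean document; each statement's English description precedes it below -/
import Mathlib

section
/- Let A be a unital star ring and z_1,…,z_N ∈ A satisfying the sphere relations Σ_{i=1}^N z_i z_i* = 1 = Σ_{i=1}^N z_i* z_i. Then the following are equivalent: (i) for all a, b, c ∈ {z_1,…,z_N} one has a b* c = c b* a; (ii) the elements {z_i z_j* : 1 ≤ i,j ≤ N} pairwise commute and the elements {z_i* z_j : 1 ≤ i,j ≤ N} pairwise commute. -/
/-- For `z₁,…,z_N` in a unital star ring satisfying the sphere relations,
the half-liberation relations `a b* c = c b* a` (for `a,b,c` among the `zᵢ`) are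
equivalent to pairwise commutation of the `zᵢ zⱼ*` and pairwise commutation of the
`zᵢ* zⱼ`. -/
theorem stmt_0 {A : Type*} [Ring A] [StarRing A] {N : ℕ}
    (z : Fin N → A)
    (h1 : ∑ i, z i * star (z i) = 1)
    (h2 : ∑ i, star (z i) * z i = 1) :
    (∀ i j k : Fin N, z i * star (z j) * z k = z k * star (z j) * z i) ↔
      ((∀ i j k l : Fin N, Commute (z i * star (z j)) (z k * star (z l))) ∧
       (∀ i j k l : Fin N, Commute (star (z i) * z j) (star (z k) * z l))) := by
  constructor
  · intro h
    have h' : ∀ i j k : Fin N,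
        star (z i) * z j * star (z k) = star (z k) * z j * star (z i) := by
      intro i j k
      have := congrArg star (h k j i)
      simpa [star_mul, mul_assoc] using this
    constructor
    · intro i j k l
      show z i * star (z j) * (z k * star (z l)) = z k * star (z l) * (z i * star (z j))
      calc z i * star (z j) * (z k * star (z l))
          = z i * (star (z j) * z k * star (z l)) := by simp [mul_assoc]
        _ = z i * (star (z l) * z k * star (z j)) := by rw [h']
        _ = z i * star (z l) * z k * star (z j) := by simp [mul_assoc]
        _ = z k * star (z l) * z i * star (z j) := by rw [h]
        _ = z k * star (z l) * (z i * star (z j)) := by simp [mul_assoc]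
    · intro i j k l
      show star (z i) * z j * (star (z k) * z l) = star (z k) * z l * (star (z i) * z j)
      calc star (z i) * z j * (star (z k) * z l)
          = star (z i) * (z j * star (z k) * z l) := by simp [mul_assoc]
        _ = star (z i) * (z l * star (z k) * z j) := by rw [h]
        _ = star (z i) * z l * star (z k) * z j := by simp [mul_assoc]
        _ = star (z k) * z l * star (z i) * z j := by rw [h']
        _ = star (z k) * z l * (star (z i) * z j) := by simp [mul_assoc]
  · rintro ⟨hc1, hc2⟩ i j k
    calc z i * star (z j) * z k
        = ∑ l, z i * star (z j) * z k * (star (z l) * z l) := by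
          rw [← Finset.mul_sum, h2, mul_one]
      _ = ∑ l, z k * star (z j) * (z l * star (z l)) * z i := by
          refine Finset.sum_congr rfl fun l _ => ?_
          calc z i * star (z j) * z k * (star (z l) * z l)
              = z i * star (z j) * (z k * star (z l)) * z l := by simp [mul_assoc]
            _ = z k * star (z l) * (z i * star (z j)) * z l := by rw [(hc1 i j k l).eq]
            _ = z k * (star (z l) * z i * (star (z j) * z l)) := by simp [mul_assoc]
            _ = z k * (star (z j) * z l * (star (z l) * z i)) := by rw [(hc2 l i j l).eq]
            _ = z k * star (z j) * (z l * star (z l)) * z i := by simp [mul_assoc]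
      _ = z k * star (z j) * z i := by
          rw [← Finset.sum_mul, ← Finset.mul_sum, h1, mul_one]
end

section
/- Let A be a unital star ring and z_1,…,z_N ∈ A satisfying the sphere relations Σ_{i=1}^N z_i z_i* = 1 = Σ_{i=1}^N z_i* z_i. Then the following are equivalent: (i) for all a, b, c ∈ {z_1,…,z_N, z_1*,…,z_N*} one has a b c = c b a; (ii) all elements of the set {z_i z_j, z_i z_j*, z_i* z_j, z_i* z_j* : 1 ≤ i,j ≤ N} pairwise commute. -/
/-- For `z₁,…,z_N` in a unital star ring satisfying the sphere relations,
the relations `a b c = c b a` for all `a,b,c` in `{zᵢ, zᵢ*}` are equivalent to the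
pairwise commutation of all products of two elements of `{zᵢ, zᵢ*}`, i.e. of all
elements `zᵢ zⱼ, zᵢ zⱼ*, zᵢ* zⱼ, zᵢ* zⱼ*`. -/
theorem stmt_1 {A : Type*} [Ring A] [StarRing A] {N : ℕ}
    (z : Fin N → A)
    (h1 : ∑ i, z i * star (z i) = 1)
    (h2 : ∑ i, star (z i) * z i = 1)
    (S : Set A) (hS : S = Set.range z ∪ Set.range fun i => star (z i)) :
    (∀ a ∈ S, ∀ b ∈ S, ∀ c ∈ S, a * b * c = c * b * a) ↔
      (∀ a ∈ S, ∀ b ∈ S, ∀ c ∈ S, ∀ d ∈ S, Commute (a * b) (c * d)) := by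
  have hz : ∀ i, z i ∈ S := fun i => hS ▸ Or.inl ⟨i, rfl⟩
  have hsz : ∀ i, star (z i) ∈ S := fun i => hS ▸ Or.inr ⟨i, rfl⟩
  constructor
  · intro H a ha b hb c hc d hd
    show a * b * (c * d) = c * d * (a * b)
    calc a * b * (c * d) = (a * b * c) * d := (mul_assoc (a*b) c d).symm
      _ = c * b * a * d := by rw [H a ha b hb c hc]
      _ = c * (b * a * d) := by rw [mul_assoc c b a, mul_assoc c (b*a) d]
      _ = c * (d * a * b) := by rw [H b hb a ha d hd]
      _ = c * d * (a * b) := by rw [mul_assoc d a b, ← mul_assoc]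
  · intro H a ha b hb c hc
    have key : ∀ i, z i * star (z i) * (a * (b * c))
        = c * (star (z i) * z i) * (b * a) := by
      intro i
      calc z i * star (z i) * (a * (b * c))
          = z i * ((star (z i) * a) * (b * c)) := by simp only [mul_assoc]
        _ = z i * ((b * c) * (star (z i) * a)) := by
            rw [(H _ (hsz i) a ha b hb c hc).eq]
        _ = (z i * b) * ((c * star (z i)) * a) := by simp only [mul_assoc]
        _ = ((c * star (z i)) * (z i * b)) * a := by
            rw [← mul_assoc, (H _ (hz i) b hb c hc _ (hsz i)).eq]
        _ = c * (star (z i) * z i) * (b * a) := by simp only [mul_assoc]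
    calc a * b * c = (∑ i, z i * star (z i)) * (a * (b * c)) := by
          rw [h1, one_mul, mul_assoc]
      _ = ∑ i, z i * star (z i) * (a * (b * c)) := by rw [Finset.sum_mul]
      _ = ∑ i, c * (star (z i) * z i) * (b * a) :=
          Finset.sum_congr rfl fun i _ => key i
      _ = c * (∑ i, star (z i) * z i) * (b * a) := by
          simp only [Finset.mul_sum, Finset.sum_mul, mul_assoc]
      _ = c * b * a := by rw [h2, mul_one, ← mul_assoc]
end

section
/- Let K ≥ 1, let A be a unital star ring, and let z_1,…,z_N ∈ A satisfy the sphere relations Σ_{i=1}^N z_i z_i* = 1 = Σ_{i=1}^N z_i* z_i together with the K-commutation relations: for all index tuples (i_1,…,i_K) and (j_1,…,j_K) in {1,…,N}^K, the element z_{i_1}⋯z_{i_K} commutes with z_{j_1}⋯z_{j_K} and with z_{j_1}*⋯z_{j_K}*. Then for all indices: (1) z_{i_1}(z_{i_2}⋯z_{i_K})z_{i_{K+1}} = z_{i_{K+1}}(z_{i_2}⋯z_{i_K})z_{i_1}; (2) the elements z_i z_j*, z_k z_l*, z_i* z_j, z_k* z_l all pairwise commute, i.e. [z_i z_j*, z_k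 z_l*] = [z_i* z_j, z_k* z_l] = [z_i z_j*, z_k* z_l] = 0; (3) [z_{i_1}⋯z_{i_K}, z_i z_j*] = 0 = [z_{i_1}⋯z_{i_K}, z_i* z_j]. -/
namespace Stmt2Aux

variable {A : Type*} [Ring A] [StarRing A] {N : ℕ}

omit [StarRing A] in
lemma word_cons' (z : Fin N → A) (i : Fin N) (l : List (Fin N)) :
    (((i :: l).map z)).prod = z i * (l.map z).prod := by simp

omit [StarRing A] in
lemma word_append (z : Fin N → A) (l : List (Fin N)) (i : Fin N) :
    (((l ++ [i]).map z)).prod = (l.map z).prod * z i := by simp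

lemma star_word (z : Fin N → A) (l : List (Fin N)) :
    star ((l.map z).prod) = (l.reverse.map fun j => star (z j)).prod := by
  induction l with
  | nil => simp
  | cons a l ih => simp [star_mul, ih]

lemma word_cons (z : Fin N → A) {k : ℕ} (i : Fin N) (t : Fin k → Fin N) :
    ((List.ofFn (Fin.cons i t : Fin (k+1) → Fin N)).map z).prod
      = z i * ((List.ofFn t).map z).prod := by
  simp [List.ofFn_succ]

omit [StarRing A] in
lemma sum_split {k : ℕ} (F : (Fin (k+1) → Fin N) → A) :
    ∑ t : Fin (k+1) → Fin N, F t
      = ∑ i : Fin N, ∑ t : Fin k → Fin N, F (Fin.cons i t) := by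
  calc ∑ t : Fin (k+1) → Fin N, F t
      = ∑ p : Fin N × (Fin k → Fin N), F (Fin.cons p.1 p.2) :=
        (Fintype.sum_equiv (Fin.consEquiv (fun _ : Fin (k+1) => Fin N))
          (fun p : Fin N × (Fin k → Fin N) => F (Fin.cons p.1 p.2)) F (fun p => rfl)).symm
    _ = ∑ i : Fin N, ∑ t : Fin k → Fin N, F (Fin.cons i t) := Fintype.sum_prod_type _

lemma sum_ww (z : Fin N → A) (h1 : ∑ i, z i * star (z i) = 1) :
    ∀ k : ℕ, ∑ t : Fin k → Fin N,
      ((List.ofFn t).map z).prod * star (((List.ofFn t).map z).prod) = 1 := by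
  intro k
  induction k with
  | zero => simp
  | succ k ih =>
    rw [sum_split]
    calc ∑ i : Fin N, ∑ t : Fin k → Fin N,
          ((List.ofFn (Fin.cons i t : Fin (k+1) → Fin N)).map z).prod *
            star (((List.ofFn (Fin.cons i t : Fin (k+1) → Fin N)).map z).prod)
        = ∑ i : Fin N, z i * (∑ t : Fin k → Fin N,
            ((List.ofFn t).map z).prod * star (((List.ofFn t).map z).prod)) * star (z i) := by
          refine Finset.sum_congr rfl fun i _ => ?_
          rw [Finset.mul_sum, Finset.sum_mul]
          refine Finset.sum_congr rfl fun t _ => ?_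
          rw [word_cons, star_mul]
          noncomm_ring
      _ = 1 := by rw [ih]; simpa using h1

lemma sum_sww (z : Fin N → A) (h2 : ∑ i, star (z i) * z i = 1) :
    ∀ k : ℕ, ∑ t : Fin k → Fin N,
      star (((List.ofFn t).map z).prod) * ((List.ofFn t).map z).prod = 1 := by
  intro k
  induction k with
  | zero => simp
  | succ k ih =>
    rw [sum_split]
    calc ∑ i : Fin N, ∑ t : Fin k → Fin N,
          star (((List.ofFn (Fin.cons i t : Fin (k+1) → Fin N)).map z).prod) *
            ((List.ofFn (Fin.cons i t : Fin (k+1) → Fin N)).map z).prod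
        = ∑ t : Fin k → Fin N, star (((List.ofFn t).map z).prod) *
            (∑ i : Fin N, star (z i) * z i) * ((List.ofFn t).map z).prod := by
          rw [Finset.sum_comm]
          refine Finset.sum_congr rfl fun t _ => ?_
          rw [Finset.mul_sum, Finset.sum_mul]
          refine Finset.sum_congr rfl fun i _ => ?_
          rw [word_cons, star_mul]
          noncomm_ring
      _ = 1 := by rw [h2]; simpa using ih

section Main

variable (z : Fin N → A) {K : ℕ}
variable (hcomm : ∀ l m : List (Fin N), l.length = K → m.length = K →
      Commute ((l.map z).prod) ((m.map z).prod) ∧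
      Commute ((l.map z).prod) ((m.map fun j => star (z j)).prod))

include hcomm

/-- word-word commute -/
lemma cww (u v : List (Fin N)) (hu : u.length = K) (hv : v.length = K) :
    Commute ((u.map z).prod) ((v.map z).prod) :=
  (hcomm u v hu hv).1

/-- word commutes with star of word -/
lemma cws (u v : List (Fin N)) (hu : u.length = K) (hv : v.length = K) :
    Commute ((u.map z).prod) (star ((v.map z).prod)) := by
  rw [star_word]
  exact (hcomm u v.reverse hu (by simpa using hv)).2

lemma csw (u v : List (Fin N)) (hu : u.length = K) (hv : v.length = K) :
    Commute (star ((u.map z).prod)) ((v.map z).prod) := by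
  have h := (cws z hcomm u v hu hv).star_star
  rwa [star_star] at h

lemma css (u v : List (Fin N)) (hu : u.length = K) (hv : v.length = K) :
    Commute (star ((u.map z).prod)) (star ((v.map z).prod)) :=
  (cww z hcomm u v hu hv).star_star

omit hcomm
variable {k : ℕ}
variable (h1 : ∑ i, z i * star (z i) = 1) (h2 : ∑ i, star (z i) * z i = 1)

include h1

/-- representation of `z i * star (z j)` -/
lemma R1 (i j : Fin N) :
    z i * star (z j) = ∑ t : Fin k → Fin N,
      (((i :: List.ofFn t).map z).prod) * star (((j :: List.ofFn t).map z).prod) := by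
  have : ∀ t : Fin k → Fin N,
      (((i :: List.ofFn t).map z).prod) * star (((j :: List.ofFn t).map z).prod)
        = z i * (((List.ofFn t).map z).prod * star (((List.ofFn t).map z).prod)) * star (z j) := by
    intro t
    rw [word_cons', word_cons', star_mul]
    noncomm_ring
  rw [Finset.sum_congr rfl fun t _ => this t, ← Finset.sum_mul, ← Finset.mul_sum,
    sum_ww z h1 k, mul_one]

omit h1
include h2

/-- representation of `star (z i) * z j` -/
lemma R2 (i j : Fin N) :
    star (z i) * z j = ∑ t : Fin k → Fin N,
      star (((List.ofFn t ++ [i]).map z).prod) * (((List.ofFn t ++ [j]).map z).prod) := by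
  have : ∀ t : Fin k → Fin N,
      star (((List.ofFn t ++ [i]).map z).prod) * (((List.ofFn t ++ [j]).map z).prod)
        = star (z i) * (star (((List.ofFn t).map z).prod) * (((List.ofFn t).map z).prod)) * z j := by
    intro t
    rw [word_append, word_append, star_mul]
    noncomm_ring
  rw [Finset.sum_congr rfl fun t _ => this t, ← Finset.sum_mul, ← Finset.mul_sum,
    sum_sww z h2 k, mul_one]

omit h2

include hcomm h1

lemma Lw1 (hk : k + 1 = K) (l : List (Fin N)) (hl : l.length = K) (i j : Fin N) :
    Commute ((l.map z).prod) (z i * star (z j)) := by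
  rw [R1 (k := k) z h1 i j]
  exact Commute.sum_right _ _ _ fun t _ =>
    (cww z hcomm l _ hl (by simp [hk])).mul_right (cws z hcomm l _ hl (by simp [hk]))

lemma Ls1 (hk : k + 1 = K) (l : List (Fin N)) (hl : l.length = K) (i j : Fin N) :
    Commute (star ((l.map z).prod)) (z i * star (z j)) := by
  rw [R1 (k := k) z h1 i j]
  exact Commute.sum_right _ _ _ fun t _ =>
    (csw z hcomm l _ hl (by simp [hk])).mul_right (css z hcomm l _ hl (by simp [hk]))

omit h1
include h2

lemma Lw2 (hk : k + 1 = K) (l : List (Fin N)) (hl : l.length = K) (i j : Fin N) :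
    Commute ((l.map z).prod) (star (z i) * z j) := by
  rw [R2 (k := k) z h2 i j]
  exact Commute.sum_right _ _ _ fun t _ =>
    (cws z hcomm l _ hl (by simp [hk])).mul_right (cww z hcomm l _ hl (by simp [hk]))

lemma Ls2 (hk : k + 1 = K) (l : List (Fin N)) (hl : l.length = K) (i j : Fin N) :
    Commute (star ((l.map z).prod)) (star (z i) * z j) := by
  rw [R2 (k := k) z h2 i j]
  exact Commute.sum_right _ _ _ fun t _ =>
    (css z hcomm l _ hl (by simp [hk])).mul_right (csw z hcomm l _ hl (by simp [hk]))

end Main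

end Stmt2Aux

/-- In a unital star ring, if `z₁,…,z_N` satisfy the sphere relations
and the `K`-commutation relations (all length-`K` products in the `zᵢ` commute with
all length-`K` products in the `zᵢ` and in the `zᵢ*`), then:
(1) `z_{i₁}(z_{i₂}⋯z_{i_K})z_{i_{K+1}} = z_{i_{K+1}}(z_{i₂}⋯z_{i_K})z_{i₁}`;
(2) the elements `zᵢ zⱼ*`, `zᵢ* zⱼ` all pairwise commute;
(3) any length-`K` product `z_{i₁}⋯z_{i_K}` commutes with each `zᵢ zⱼ*` and `zᵢ* zⱼ`. -/
theorem stmt_2 {A : Type*} [Ring A] [StarRing A] {N : ℕ} (K : ℕ) (hK : 1 ≤ K)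
    (z : Fin N → A)
    (h1 : ∑ i, z i * star (z i) = 1)
    (h2 : ∑ i, star (z i) * z i = 1)
    (hcomm : ∀ l m : List (Fin N), l.length = K → m.length = K →
      Commute ((l.map z).prod) ((m.map z).prod) ∧
      Commute ((l.map z).prod) ((m.map fun j => star (z j)).prod)) :
    (∀ (a b : Fin N) (l : List (Fin N)), l.length + 1 = K →
      z a * (l.map z).prod * z b = z b * (l.map z).prod * z a) ∧
    (∀ i j k l : Fin N,
      Commute (z i * star (z j)) (z k * star (z l)) ∧
      Commute (star (z i) * z j) (star (z k) * z l) ∧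
      Commute (z i * star (z j)) (star (z k) * z l)) ∧
    (∀ l : List (Fin N), l.length = K → ∀ i j : Fin N,
      Commute ((l.map z).prod) (z i * star (z j)) ∧
      Commute ((l.map z).prod) (star (z i) * z j)) := by
  open Stmt2Aux in
  obtain ⟨k, hk⟩ : ∃ k, k + 1 = K := ⟨K - 1, Nat.succ_pred_eq_of_pos hK⟩
  have Lw1' := Stmt2Aux.Lw1 (k := k) z hcomm h1 hk
  have Ls1' := Stmt2Aux.Ls1 (k := k) z hcomm h1 hk
  have Lw2' := Stmt2Aux.Lw2 (k := k) z hcomm h2 hk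
  have Ls2' := Stmt2Aux.Ls2 (k := k) z hcomm h2 hk
  refine ⟨?_, ?_, ?_⟩
  · -- (1)
    intro a b l hl
    have step : ∀ i : Fin N,
        z a * (l.map z).prod * z b * (star (z i) * z i)
          = z b * (l.map z).prod * (z i * star (z i)) * z a := by
      intro i
      have c1 : (z a * (l.map z).prod) * (z b * star (z i))
          = (z b * star (z i)) * (z a * (l.map z).prod) := by
        have := (Lw1' (a :: l) (by simpa using hl) b i).eq
        simpa using this
      have c2 : ((l.map z).prod * z i) * (star (z i) * z a)
          = (star (z i) * z a) * ((l.map z).prod * z i) := by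
        have := (Lw2' (l ++ [i]) (by simpa using hl) i a).eq
        simpa using this
      calc z a * (l.map z).prod * z b * (star (z i) * z i)
          = ((z a * (l.map z).prod) * (z b * star (z i))) * z i := by
            simp only [mul_assoc]
        _ = ((z b * star (z i)) * (z a * (l.map z).prod)) * z i := by rw [c1]
        _ = z b * ((star (z i) * z a) * ((l.map z).prod * z i)) := by
            simp only [mul_assoc]
        _ = z b * (((l.map z).prod * z i) * (star (z i) * z a)) := by rw [← c2]
        _ = z b * (l.map z).prod * (z i * star (z i)) * z a := by
            simp only [mul_assoc]
    calc z a * (l.map z).prod * z b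
        = z a * (l.map z).prod * z b * (∑ i, star (z i) * z i) := by rw [h2, mul_one]
      _ = ∑ i, z a * (l.map z).prod * z b * (star (z i) * z i) := by rw [Finset.mul_sum]
      _ = ∑ i, z b * (l.map z).prod * (z i * star (z i)) * z a := by
          exact Finset.sum_congr rfl fun i _ => step i
      _ = z b * (l.map z).prod * (∑ i, z i * star (z i)) * z a := by
          rw [← Finset.sum_mul, ← Finset.mul_sum]
      _ = z b * (l.map z).prod * z a := by rw [h1, mul_one]
  · -- (2)
    intro i j p q
    refine ⟨?_, ?_, ?_⟩
    · rw [Stmt2Aux.R1 (k := k) z h1 i j]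
      exact Commute.sum_left _ _ _ fun t _ =>
        (Lw1' _ (by simp [hk]) p q).mul_left (Ls1' _ (by simp [hk]) p q)
    · rw [Stmt2Aux.R2 (k := k) z h2 i j]
      exact Commute.sum_left _ _ _ fun t _ =>
        (Ls2' _ (by simp [hk]) p q).mul_left (Lw2' _ (by simp [hk]) p q)
    · rw [Stmt2Aux.R1 (k := k) z h1 i j]
      exact Commute.sum_left _ _ _ fun t _ =>
        (Lw2' _ (by simp [hk]) p q).mul_left (Ls2' _ (by simp [hk]) p q)
  · -- (3)
    intro l hl i j
    exact ⟨Lw1' l hl i j, Lw2' l hl i j⟩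
end

section
/- Let K ≥ 1, let A be a unital star ring, and let z_1,…,z_N ∈ A satisfy the sphere relations Σ_{i=1}^N z_i z_i* = 1 = Σ_{i=1}^N z_i* z_i together with the K-commutation relations: for all index tuples (i_1,…,i_K) and (j_1,…,j_K) in {1,…,N}^K, the element z_{i_1}⋯z_{i_K} commutes with z_{j_1}⋯z_{j_K} and with z_{j_1}*⋯z_{j_K}*. Call a word w = z_{i_1}^{e_1}⋯z_{i_s}^{e_s} (with s ≥ 0, each e_r ∈ {1,*}) balanced mod K if the number of indices r with e_r = 1 is congruent modulo K to the number of indices r with e_r = *. Then any two balanced-mod-K words in z_1,…,z_N, z_1*,…,z_N* commute. -/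
namespace Stmt3Aux

variable {A : Type*} [Ring A] [StarRing A] {N : ℕ}

def pz (z : Fin N → A) (l : List (Fin N)) : A := (l.map z).prod
def qz (z : Fin N → A) (l : List (Fin N)) : A := (l.map fun j => star (z j)).prod

lemma pz_cons (z : Fin N → A) (i : Fin N) (l : List (Fin N)) :
    pz z (i :: l) = z i * pz z l := by simp [pz]

lemma qz_cons (z : Fin N → A) (i : Fin N) (l : List (Fin N)) :
    qz z (i :: l) = star (z i) * qz z l := by simp [qz]

lemma pz_append (z : Fin N → A) (l m : List (Fin N)) :
    pz z (l ++ m) = pz z l * pz z m := by simp [pz]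

lemma qz_append (z : Fin N → A) (l m : List (Fin N)) :
    qz z (l ++ m) = qz z l * qz z m := by simp [qz]

lemma star_pz (z : Fin N → A) : ∀ l : List (Fin N), star (pz z l) = qz z l.reverse := by
  intro l
  induction l with
  | nil => simp [pz, qz]
  | cons i l ih => simp [pz, qz, List.prod_cons, star_mul] at *; simp [ih.symm, pz, qz]

lemma qz_eq_star_pz (z : Fin N → A) (l : List (Fin N)) :
    qz z l = star (pz z l.reverse) := by
  rw [star_pz, List.reverse_reverse]

/-- the generating set: all plain/starred words of length `K` -/
def S (K : ℕ) (z : Fin N → A) : Set A :=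
  {x | ∃ l : List (Fin N), l.length = K ∧ (x = pz z l ∨ x = qz z l)}

def R (K : ℕ) (z : Fin N → A) : Subring A := Subring.closure (S K z)

lemma mem_R_pz (K : ℕ) (z : Fin N → A) {l : List (Fin N)} (hl : l.length = K) :
    pz z l ∈ R K z :=
  Subring.subset_closure ⟨l, hl, Or.inl rfl⟩

lemma mem_R_qz (K : ℕ) (z : Fin N → A) {l : List (Fin N)} (hl : l.length = K) :
    qz z l ∈ R K z :=
  Subring.subset_closure ⟨l, hl, Or.inr rfl⟩

section comm

variable (K : ℕ) (z : Fin N → A)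
variable (hcomm : ∀ l m : List (Fin N), l.length = K → m.length = K →
      Commute ((l.map z).prod) ((m.map z).prod) ∧
      Commute ((l.map z).prod) ((m.map fun j => star (z j)).prod))

include hcomm

lemma S_comm : ∀ x ∈ S K z, ∀ y ∈ S K z, Commute x y := by
  rintro x ⟨l, hl, hx⟩ y ⟨m, hm, hy⟩
  have hpp : ∀ l m : List (Fin N), l.length = K → m.length = K →
      Commute (pz z l) (pz z m) := fun l m hl hm => (hcomm l m hl hm).1
  have hpq : ∀ l m : List (Fin N), l.length = K → m.length = K →
      Commute (pz z l) (qz z m) := fun l m hl hm => (hcomm l m hl hm).2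
  have hqq : ∀ l m : List (Fin N), l.length = K → m.length = K →
      Commute (qz z l) (qz z m) := by
    intro l m hl hm
    rw [qz_eq_star_pz, qz_eq_star_pz]
    exact (hpp _ _ (by simpa using hl) (by simpa using hm)).star_star
  rcases hx with rfl | rfl <;> rcases hy with rfl | rfl
  · exact hpp l m hl hm
  · exact hpq l m hl hm
  · exact (hpq m l hm hl).symm
  · exact hqq l m hl hm

lemma R_comm : ∀ x ∈ R K z, ∀ y ∈ R K z, Commute x y := by
  have h1 : R K z ≤ Subring.centralizer (S K z) := by
    rw [R, Subring.closure_le]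
    intro s hs
    rw [SetLike.mem_coe, Subring.mem_centralizer_iff]
    intro g hg
    exact S_comm K z hcomm g hg s hs
  have h2 : R K z ≤ Subring.centralizer (R K z : Set A) := by
    rw [R, Subring.closure_le]
    intro s hs
    rw [SetLike.mem_coe, Subring.mem_centralizer_iff]
    intro g hg
    exact (Subring.mem_centralizer_iff.1 (h1 hg) s hs).symm
  intro x hx y hy
  exact Subring.mem_centralizer_iff.1 (h2 hy) x hx

end comm


/-- words with a plain tail of length `r` and a coefficient in `R` -/
def Tz (K : ℕ) (z : Fin N → A) (r : ℕ) : AddSubgroup A :=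
  AddSubgroup.closure
    {x | ∃ (V : List (Fin N)) (C : A), V.length = r ∧ C ∈ R K z ∧ x = pz z V * C}

/-- words with a starred tail of length `r` and a coefficient in `R` -/
def Tq (K : ℕ) (z : Fin N → A) (r : ℕ) : AddSubgroup A :=
  AddSubgroup.closure
    {x | ∃ (V : List (Fin N)) (C : A), V.length = r ∧ C ∈ R K z ∧ x = qz z V * C}

lemma R_le_Tz0 (K : ℕ) (z : Fin N → A) {x : A} (hx : x ∈ R K z) : x ∈ Tz K z 0 :=
  AddSubgroup.subset_closure ⟨[], x, rfl, hx, by simp [pz]⟩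

lemma R_le_Tq0 (K : ℕ) (z : Fin N → A) {x : A} (hx : x ∈ R K z) : x ∈ Tq K z 0 :=
  AddSubgroup.subset_closure ⟨[], x, rfl, hx, by simp [qz]⟩

lemma putz (K : ℕ) (z : Fin N → A) {V : List (Fin N)} {C : A}
    (hV : V.length ≤ K) (hC : C ∈ R K z) :
    pz z V * C ∈ Tz K z (V.length % K) := by
  rcases lt_or_eq_of_le hV with h | h
  · rw [Nat.mod_eq_of_lt h]
    exact AddSubgroup.subset_closure ⟨V, C, rfl, hC, rfl⟩
  · rw [h, Nat.mod_self]
    exact R_le_Tz0 K z (mul_mem (mem_R_pz K z h) hC)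

lemma putq (K : ℕ) (z : Fin N → A) {V : List (Fin N)} {C : A}
    (hV : V.length ≤ K) (hC : C ∈ R K z) :
    qz z V * C ∈ Tq K z (V.length % K) := by
  rcases lt_or_eq_of_le hV with h | h
  · rw [Nat.mod_eq_of_lt h]
    exact AddSubgroup.subset_closure ⟨V, C, rfl, hC, rfl⟩
  · rw [h, Nat.mod_self]
    exact R_le_Tq0 K z (mul_mem (mem_R_qz K z h) hC)

lemma splitP (z : Fin N → A) (h1 : ∑ i, z i * star (z i) = 1) :
    ∀ (t : ℕ) (y : A) (T : AddSubgroup A),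
      (∀ m : List (Fin N), m.length = t → pz z m * (qz z m.reverse * y) ∈ T) → y ∈ T := by
  intro t
  induction t with
  | zero =>
    intro y T h
    simpa [pz, qz] using h [] rfl
  | succ t ih =>
    intro y T h
    have hy : y = ∑ i : Fin N, z i * (star (z i) * y) := by
      calc y = (∑ i, z i * star (z i)) * y := by rw [h1, one_mul]
        _ = ∑ i : Fin N, z i * (star (z i) * y) := by
              rw [Finset.sum_mul]; simp [mul_assoc]
    rw [hy]
    refine AddSubgroup.sum_mem T fun i _ => ?_
    have key := ih (star (z i) * y) (T.comap (AddMonoidHom.mulLeft (z i))) ?_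
    · simpa using key
    · intro m hm
      have h2 := h (i :: m) (by simp [hm])
      simp only [AddSubgroup.mem_comap, AddMonoidHom.coe_mulLeft]
      have : z i * (pz z m * (qz z m.reverse * (star (z i) * y)))
          = pz z (i :: m) * (qz z ((i :: m).reverse) * y) := by
        simp [pz, qz, List.reverse_cons, List.map_append, mul_assoc]
      rw [this]
      exact h2

lemma splitQ (z : Fin N → A) (h2 : ∑ i, star (z i) * z i = 1) :
    ∀ (t : ℕ) (y : A) (T : AddSubgroup A),
      (∀ m : List (Fin N), m.length = t → qz z m * (pz z m.reverse * y) ∈ T) → y ∈ T := by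
  intro t
  induction t with
  | zero =>
    intro y T h
    simpa [pz, qz] using h [] rfl
  | succ t ih =>
    intro y T h
    have hy : y = ∑ i : Fin N, star (z i) * (z i * y) := by
      calc y = (∑ i, star (z i) * z i) * y := by rw [h2, one_mul]
        _ = ∑ i : Fin N, star (z i) * (z i * y) := by
              rw [Finset.sum_mul]; simp [mul_assoc]
    rw [hy]
    refine AddSubgroup.sum_mem T fun i _ => ?_
    have key := ih (z i * y) (T.comap (AddMonoidHom.mulLeft (star (z i)))) ?_
    · simpa using key
    · intro m hm
      have h3 := h (i :: m) (by simp [hm])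
      simp only [AddSubgroup.mem_comap, AddMonoidHom.coe_mulLeft]
      have : star (z i) * (qz z m * (pz z m.reverse * (z i * y)))
          = qz z (i :: m) * (pz z ((i :: m).reverse) * y) := by
        simp [pz, qz, List.reverse_cons, List.map_append, mul_assoc]
      rw [this]
      exact h3

lemma sum_cases {K x y : ℕ} (hK : 0 < K) (hx : x < K) (hy : y < K)
    (h : (x + y) % K = 0) : x + y = 0 ∨ x + y = K := by
  obtain ⟨c, hc⟩ := Nat.dvd_of_mod_eq_zero h
  match c, hc with
  | 0, hc => left; omega
  | 1, hc => right; omega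
  | (c+2), hc =>
    exfalso
    have h2 : K * (c + 2) = K * c + K + K := by ring
    omega


lemma arith1 {K : ℕ} (hK : 1 ≤ K) (a b : ℕ) :
    (a + (K-1)*b + (b + (K-1)*a)) % K = 0 := by
  obtain ⟨K', rfl⟩ : ∃ K', K = K' + 1 := ⟨K-1, by omega⟩
  have h : a + (K'+1-1)*b + (b + (K'+1-1)*a) = (K'+1)*(a+b) := by
    simp only [Nat.add_sub_cancel]; ring
  rw [h, Nat.mul_mod_right]

lemma balanced_zero {K : ℕ} (hK : 1 ≤ K) {a b : ℕ} (h : a % K = b % K) :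
    (a + (K-1)*b) % K = 0 := by
  haveI : NeZero K := ⟨by omega⟩
  have hcast : ((a + (K-1)*b : ℕ) : ZMod K) = 0 := by
    have hK1 : ((K - 1 : ℕ) : ZMod K) = -1 := by
      rw [Nat.cast_sub hK]; simp [ZMod.natCast_self]
    have hab : (a : ZMod K) = (b : ZMod K) := (ZMod.natCast_eq_natCast_iff' a b K).2 h
    push_cast
    rw [hK1, hab]; ring
  have hdvd : K ∣ a + (K-1)*b := (ZMod.natCast_eq_zero_iff _ _).1 hcast
  omega

lemma main (K : ℕ) (hK : 1 ≤ K) (z : Fin N → A)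
    (h1 : ∑ i, z i * star (z i) = 1)
    (h2 : ∑ i, star (z i) * z i = 1) :
    ∀ w : List (Fin N × Bool),
      ((w.map fun p => if p.2 then z p.1 else star (z p.1)).prod) ∈
        Tz K z ((w.countP (fun p => p.2) + (K-1) * w.countP (fun p => !p.2)) % K) ⊔
        Tq K z ((w.countP (fun p => !p.2) + (K-1) * w.countP (fun p => p.2)) % K) := by
  intro w
  induction w with
  | nil =>
    simp only [List.map_nil, List.prod_nil, List.countP_nil]
    have h0 : (0 + (K-1) * 0) % K = 0 := by simp
    rw [h0]
    exact SetLike.le_def.mp le_sup_left (R_le_Tz0 K z (one_mem _))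
  | cons p w ih =>
    obtain ⟨i, e⟩ := p
    have hK0 : 0 < K := hK
    set a := w.countP (fun p => p.2) with ha
    set b := w.countP (fun p => !p.2) with hb
    set dz := (a + (K-1)*b) % K with hdz
    set dq := (b + (K-1)*a) % K with hdq
    have hdzK : dz < K := Nat.mod_lt _ hK0
    have hdqK : dq < K := Nat.mod_lt _ hK0
    have hsum0 : (dz + dq) % K = 0 := by
      rw [hdz, hdq, ← Nat.add_mod]
      exact arith1 hK a b
    have hcase : dz + dq = 0 ∨ dz + dq = K := sum_cases hK0 hdzK hdqK hsum0
    rcases e with _ | _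
    · -- e = false : starred letter
      simp only [List.map_cons, List.prod_cons, List.countP_cons, ← ha, ← hb]
      norm_num
      have e1 : (a + (K-1) * (b + 1)) % K = (dz + (K-1)) % K := by
        rw [hdz, Nat.mod_add_mod]
        congr 1; ring
      have e2 : (b + 1 + (K-1) * a) % K = (dq + 1) % K := by
        rw [hdq, Nat.mod_add_mod]
        congr 1; ring
      rw [e1, e2]
      have hsub : Tz K z dz ⊔ Tq K z dq ≤
          AddSubgroup.comap (AddMonoidHom.mulLeft (star (z i)))
            (Tz K z ((dz + (K-1)) % K) ⊔ Tq K z ((dq + 1) % K)) := by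
        refine sup_le ?_ ?_
        · rw [Tz, AddSubgroup.closure_le]
          rintro x ⟨V, C, hV, hC, rfl⟩
          rw [SetLike.mem_coe]
          by_cases h0 : dz = 0
          · simp only [AddSubgroup.mem_comap, AddMonoidHom.coe_mulLeft]
            have hV0 : V = [] := List.length_eq_zero_iff.mp (by rw [hV, h0])
            subst hV0
            have heq : star (z i) * (pz z [] * C) = qz z [i] * C := by
              simp [pz, qz]
            rw [heq]
            have hdq0 : dq = 0 := by omega
            have hput := putq K z (V := [i]) (C := C) (by simpa using hK) hC
            simp only [List.length_cons, List.length_nil, Nat.zero_add] at hput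
            rw [hdq0]
            exact SetLike.le_def.mp le_sup_right hput
          · have hdqeq : dq = K - dz := by omega
            refine splitQ z h2 (K - dz) _ _ ?_
            intro m hm
            simp only [AddSubgroup.mem_comap, AddMonoidHom.coe_mulLeft]
            have heq : star (z i) * (qz z m * (pz z m.reverse * (pz z V * C)))
                = qz z (i :: m) * (pz z (m.reverse ++ V) * C) := by
              simp [pz_cons, qz_cons, pz_append, mul_assoc]
            rw [heq]
            have hC' : pz z (m.reverse ++ V) * C ∈ R K z := by
              refine mul_mem (mem_R_pz K z ?_) hC
              simp only [List.length_append, List.length_reverse, hm, hV]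
              omega
            have hlen : (i :: m).length ≤ K := by
              simp only [List.length_cons, hm]; omega
            have hput := putq K z hlen hC'
            have hidx : (i :: m).length % K = (dq + 1) % K := by
              simp only [List.length_cons, hm]
              congr 1
              omega
            rw [hidx] at hput
            exact SetLike.le_def.mp le_sup_right hput
        · rw [Tq, AddSubgroup.closure_le]
          rintro x ⟨U, C, hU, hC, rfl⟩
          rw [SetLike.mem_coe]
          simp only [AddSubgroup.mem_comap, AddMonoidHom.coe_mulLeft]
          have heq : star (z i) * (qz z U * C) = qz z (i :: U) * C := by
            rw [qz_cons, mul_assoc]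
          rw [heq]
          have hput := putq K z (V := i :: U) (C := C)
            (by simp only [List.length_cons, hU]; omega) hC
          have hidx : (i :: U).length % K = (dq + 1) % K := by
            simp [hU]
          rw [hidx] at hput
          exact SetLike.le_def.mp le_sup_right hput
      have := hsub ih
      simpa using this
    · -- e = true : unstarred letter
      simp only [List.map_cons, List.prod_cons, List.countP_cons, ← ha, ← hb]
      norm_num
      have e1 : (a + 1 + (K-1) * b) % K = (dz + 1) % K := by
        rw [hdz, Nat.mod_add_mod]
        congr 1; ring
      have e2 : (b + (K-1) * (a + 1)) % K = (dq + (K-1)) % K := by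
        rw [hdq, Nat.mod_add_mod]
        congr 1; ring
      rw [e1, e2]
      have hsub : Tz K z dz ⊔ Tq K z dq ≤
          AddSubgroup.comap (AddMonoidHom.mulLeft (z i))
            (Tz K z ((dz + 1) % K) ⊔ Tq K z ((dq + (K-1)) % K)) := by
        refine sup_le ?_ ?_
        · rw [Tz, AddSubgroup.closure_le]
          rintro x ⟨V, C, hV, hC, rfl⟩
          rw [SetLike.mem_coe]
          simp only [AddSubgroup.mem_comap, AddMonoidHom.coe_mulLeft]
          have heq : z i * (pz z V * C) = pz z (i :: V) * C := by
            rw [pz_cons, mul_assoc]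
          rw [heq]
          have hput := putz K z (V := i :: V) (C := C)
            (by simp only [List.length_cons, hV]; omega) hC
          have hidx : (i :: V).length % K = (dz + 1) % K := by
            simp [hV]
          rw [hidx] at hput
          exact SetLike.le_def.mp le_sup_left hput
        · rw [Tq, AddSubgroup.closure_le]
          rintro x ⟨U, C, hU, hC, rfl⟩
          rw [SetLike.mem_coe]
          by_cases h0 : dq = 0
          · simp only [AddSubgroup.mem_comap, AddMonoidHom.coe_mulLeft]
            have hU0 : U = [] := List.length_eq_zero_iff.mp (by rw [hU, h0])
            subst hU0
            have heq : z i * (qz z [] * C) = pz z [i] * C := by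
              simp [pz, qz]
            rw [heq]
            have hdz0 : dz = 0 := by omega
            have hput := putz K z (V := [i]) (C := C) (by simpa using hK) hC
            simp only [List.length_cons, List.length_nil, Nat.zero_add] at hput
            rw [hdz0]
            exact SetLike.le_def.mp le_sup_left hput
          · have hdzeq : dz = K - dq := by omega
            refine splitP z h1 (K - dq) _ _ ?_
            intro m hm
            simp only [AddSubgroup.mem_comap, AddMonoidHom.coe_mulLeft]
            have heq : z i * (pz z m * (qz z m.reverse * (qz z U * C)))
                = pz z (i :: m) * (qz z (m.reverse ++ U) * C) := by
              simp [pz_cons, qz_cons, qz_append, mul_assoc]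
            rw [heq]
            have hC' : qz z (m.reverse ++ U) * C ∈ R K z := by
              refine mul_mem (mem_R_qz K z ?_) hC
              simp only [List.length_append, List.length_reverse, hm, hU]
              omega
            have hlen : (i :: m).length ≤ K := by
              simp only [List.length_cons, hm]; omega
            have hput := putz K z hlen hC'
            have hidx : (i :: m).length % K = (dz + 1) % K := by
              simp only [List.length_cons, hm]
              congr 1
              omega
            rw [hidx] at hput
            exact SetLike.le_def.mp le_sup_left hput
      have := hsub ih
      simpa using this

end Stmt3Aux


open Stmt3Aux


/-- In a unital star ring, if `z₁,…,z_N` satisfy the sphere relations and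
the `K`-commutation relations, then any two words in the `zᵢ, zᵢ*` that are balanced
mod `K` (number of unstarred letters ≡ number of starred letters mod `K`) commute.
A word is encoded as a list of pairs `(i, e)` with `e = true` meaning the letter `zᵢ`
and `e = false` meaning the letter `zᵢ*`. -/
theorem stmt_3 {A : Type*} [Ring A] [StarRing A] {N : ℕ} (K : ℕ) (hK : 1 ≤ K)
    (z : Fin N → A)
    (h1 : ∑ i, z i * star (z i) = 1)
    (h2 : ∑ i, star (z i) * z i = 1)
    (hcomm : ∀ l m : List (Fin N), l.length = K → m.length = K →
      Commute ((l.map z).prod) ((m.map z).prod) ∧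
      Commute ((l.map z).prod) ((m.map fun j => star (z j)).prod)) :
    ∀ w₁ w₂ : List (Fin N × Bool),
      (w₁.countP (fun p => p.2)) % K = (w₁.countP (fun p => !p.2)) % K →
      (w₂.countP (fun p => p.2)) % K = (w₂.countP (fun p => !p.2)) % K →
      Commute ((w₁.map fun p => if p.2 then z p.1 else star (z p.1)).prod)
        ((w₂.map fun p => if p.2 then z p.1 else star (z p.1)).prod) := by
  have hmem : ∀ w : List (Fin N × Bool),
      (w.countP (fun p => p.2)) % K = (w.countP (fun p => !p.2)) % K →
      ((w.map fun p => if p.2 then z p.1 else star (z p.1)).prod) ∈ R K z := by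
    intro w hw
    have h := main K hK z h1 h2 w
    rw [balanced_zero hK hw, balanced_zero hK hw.symm] at h
    have hle : Tz K z 0 ⊔ Tq K z 0 ≤ (R K z).toAddSubgroup := by
      refine sup_le ?_ ?_
      · rw [Tz, AddSubgroup.closure_le]
        rintro x ⟨V, C, hV, hC, rfl⟩
        have hV0 : V = [] := List.length_eq_zero_iff.mp hV
        subst hV0
        simpa [pz] using hC
      · rw [Tq, AddSubgroup.closure_le]
        rintro x ⟨V, C, hV, hC, rfl⟩
        have hV0 : V = [] := List.length_eq_zero_iff.mp hV
        subst hV0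
        simpa [qz] using hC
    exact hle h
  intro w₁ w₂ hw₁ hw₂
  exact R_comm K z hcomm _ (hmem w₁ hw₁) _ (hmem w₂ hw₂)
end

section
/- Let N, K ≥ 1 and let r : ({1,…,N})^K → ℂ be a nonzero function (the coordinates of an element of (ℂ^N)^{⊗K} in the canonical basis). Then r is a pure tensor, i.e. there exist nonzero vectors v_1,…,v_K ∈ ℂ^N with r(i_1,…,i_K) = (v_1)_{i_1}⋯(v_K)_{i_K} for all indices, if and only if r satisfies the Segre relations: r(i_1,…,i_K)·r(j_1,…,j_K) = r(l_1,…,l_K)·r(k_1,…,k_K) whenever the unordered pairs satisfy {i_c, j_c} = {l_c, k_c} for every c = 1,…,K. -/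
lemma pair_eq_pair'' {α : Type*} {a b c d : α}
    (h : ({a, b} : Multiset α) = {c, d}) : (a = c ∧ b = d) ∨ (a = d ∧ b = c) := by
  have ha : a ∈ ({c, d} : Multiset α) := h ▸ Multiset.mem_cons_self a _
  rcases Multiset.mem_cons.mp ha with rfl | ha
  · left
    refine ⟨rfl, ?_⟩
    have := (Multiset.cons_inj_right a).mp h
    simpa using this
  · right
    have hd : a = d := by simpa using ha
    subst hd
    refine ⟨rfl, ?_⟩
    have h' : ({a, b} : Multiset α) = {a, c} := by
      rw [h]; exact Multiset.cons_swap c a 0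
    have := (Multiset.cons_inj_right a).mp h'
    simpa using this

/-- A nonzero element of `(ℂ^N)^{⊗K}`, given by its coordinate function
`r : (Fin K → Fin N) → ℂ`, is a pure tensor iff it satisfies the Segre relations:
`r(i) r(j) = r(l) r(k)` whenever the unordered pairs `{i_c, j_c}` and `{l_c, k_c}`
coincide for every `c`. -/
theorem stmt_4 (N K : ℕ) (hN : 1 ≤ N) (hK : 1 ≤ K)
    (r : (Fin K → Fin N) → ℂ) (hr : r ≠ 0) :
    (∃ v : Fin K → Fin N → ℂ, (∀ c, v c ≠ 0) ∧ ∀ idx, r idx = ∏ c, v c (idx c)) ↔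
    (∀ i j l k : Fin K → Fin N,
      (∀ c, ({i c, j c} : Multiset (Fin N)) = {l c, k c}) → r i * r j = r l * r k) := by
  constructor
  · rintro ⟨v, hv, hvr⟩ i j l k hijlk
    simp only [hvr]
    rw [← Finset.prod_mul_distrib, ← Finset.prod_mul_distrib]
    apply Finset.prod_congr rfl
    intro c _
    rcases pair_eq_pair'' (hijlk c) with ⟨h1, h2⟩ | ⟨h1, h2⟩ <;> rw [h1, h2] <;> ring
  · intro hseg
    obtain ⟨a, ha⟩ : ∃ a, r a ≠ 0 := by
      by_contra h; push_neg at h; exact hr (funext h)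
    have key : ∀ s : Finset (Fin K), ∀ idx : Fin K → Fin N,
        r (fun c => if c ∈ s then idx c else a c) * r a ^ s.card
          = r a * ∏ c ∈ s, r (Function.update a c (idx c)) := by
      intro s
      induction s using Finset.induction_on with
      | empty => intro idx; simp
      | @insert c₀ s hc₀ ih =>
        intro idx
        have hstep : r (fun c => if c ∈ insert c₀ s then idx c else a c) * r a
            = r (fun c => if c ∈ s then idx c else a c)
              * r (Function.update a c₀ (idx c₀)) := by
          apply hseg
          intro c
          by_cases h1 : c = c₀
          · subst h1
            simp only [Finset.mem_insert, true_or, if_pos, hc₀, if_neg, Function.update_self]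
            exact Multiset.cons_swap _ _ _
          · by_cases h2 : c ∈ s <;>
              simp [h1, h2, Function.update_of_ne h1]
        rw [Finset.card_insert_of_notMem hc₀, Finset.prod_insert hc₀]
        linear_combination r a ^ s.card * hstep
          + r (Function.update a c₀ (idx c₀)) * ih idx
    have key' : ∀ idx : Fin K → Fin N,
        r idx * r a ^ K = r a * ∏ c, r (Function.update a c (idx c)) := by
      intro idx
      have := key Finset.univ idx
      simpa using this
    set c₀ : Fin K := ⟨0, hK⟩
    refine ⟨fun c n => if c = c₀ then r a * (r (Function.update a c n) / r a)
      else r (Function.update a c n) / r a, ?_, ?_⟩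
    · intro c hc
      have := congrFun hc (a c)
      simp only [Function.update_eq_self, Pi.zero_apply] at this
      rw [div_self ha] at this
      split at this <;> simp_all
    · intro idx
      have hsplit : ∀ c : Fin K,
          (if c = c₀ then r a * (r (Function.update a c (idx c)) / r a)
            else r (Function.update a c (idx c)) / r a)
          = (r (Function.update a c (idx c)) / r a) * (if c = c₀ then r a else 1) := by
        intro c; split <;> ring
      simp only [hsplit]
      rw [Finset.prod_mul_distrib, Finset.prod_ite_eq' Finset.univ c₀ (fun _ => r a),
        Finset.prod_div_distrib, Finset.prod_const, Finset.card_univ, Fintype.card_fin]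
      simp only [Finset.mem_univ, if_pos]
      field_simp
      linear_combination key' idx
end

section
/- Let N, K ≥ 1, let T = (S^{N−1}_ℂ)^K, and for 1 ≤ i ≤ N and c ∈ ℤ/Kℤ let a_{i,c} ∈ C(T, ℂ) be the coordinate function a_{i,c}(z_0,…,z_{K−1}) = (z_c)_i. Define matrices Z_1,…,Z_N ∈ M_K(C(T, ℂ)) (rows and columns indexed by ℤ/Kℤ) by (Z_i)_{c,d} = a_{i,c} if d = c+1 and (Z_i)_{c,d} = 0 otherwise. Then Σ_{i=1}^N Z_i Z_i^* = 1 = Σ_{i=1}^N Z_i^* Z_i, and for all index tuples (i_1,…,i_K), (j_1,…,j_K) ∈ {1,…,N}^K the product Z_{i_1}⋯Z_{i_K} commutes with Z_{j_1}⋯Z_{j_K} and with (Z_{j_1}⋯Z_{j_K})^*. (In other words, the Z_i satisfy the defining relations of the K-half-liberated complex sphere, giving a K×K matrix model.) -/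
/-- The unit complex sphere `S^{N-1}_ℂ`, as a subtype of `Fin N → ℂ`. -/
abbrev Sph (N : ℕ) : Type := {z : Fin N → ℂ // ∑ i, ‖z i‖ ^ 2 = 1}

/-- The coordinate function `a_{i,c}(z₀,…,z_{K-1}) = (z_c)_i` on `T = (S^{N-1}_ℂ)^K`. -/
def aCoord (N K : ℕ) [NeZero K] (i : Fin N) (c : ZMod K) :
    ContinuousMap (ZMod K → Sph N) ℂ :=
  ⟨fun z => (z c).1 i,
    (continuous_apply i).comp (continuous_subtype_val.comp (continuous_apply c))⟩

/-- The matrix `Z_i ∈ M_K(C(T,ℂ))` with `(Z_i)_{c,d} = a_{i,c}` if `d = c+1`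
and `0` otherwise. -/
noncomputable def Zmat (N K : ℕ) [NeZero K] (i : Fin N) :
    Matrix (ZMod K) (ZMod K) (ContinuousMap (ZMod K → Sph N) ℂ) :=
  Matrix.of fun c d => if d = c + 1 then aCoord N K i c else 0

/-!
Each `Z_i` is a weighted cyclic shift: its only nonzero entries sit at `(c, c + 1)`. Hence
`Z_i Z_i^*` and `Z_i^* Z_i` are diagonal with entries `|a_{i,c}|²` and `|a_{i,c-1}|²`, which sum
over `i` to `1` because each `z_c` lies on the sphere. A product of `K` weighted shifts by `1`
is a weighted shift by `K = 0` in `ℤ/Kℤ`, i.e. a diagonal matrix over the commutative algebra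
`C(T, ℂ)`; diagonal matrices commute with each other and with their adjoints.
-/

open Matrix

theorem sum_diagonal_eq_one {ι n R : Type*} [Fintype ι] [DecidableEq n] [AddCommMonoidWithOne R]
    (d : ι → n → R) (hd : ∀ c, ∑ i, d i c = 1) : ∑ i, diagonal (d i) = 1 := by
  refine (map_sum (diagonalAddMonoidHom n R) d _).symm.trans ?_
  rw [diagonalAddMonoidHom_apply, ← diagonal_one]
  exact congrArg diagonal (funext fun c => by simp [hd])

section WeightedShift

variable {G R : Type*} [AddGroup G] [DecidableEq G]

def weightedShift [Zero R] (g : G) (a : G → R) : Matrix G G R :=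
  of fun c d => if d = c + g then a c else 0

theorem weightedShift_zero [Zero R] (a : G → R) : weightedShift 0 a = diagonal a := by
  ext c d
  simp [weightedShift, diagonal_apply, eq_comm]

variable [Fintype G] [Semiring R]

theorem weightedShift_mul_weightedShift (g h : G) (a b : G → R) :
    weightedShift g a * weightedShift h b =
      weightedShift (g + h) fun c => a c * b (c + g) := by
  ext c d
  simp only [weightedShift, of_apply, mul_apply, ite_mul, zero_mul, Finset.sum_ite_eq',
    Finset.mem_univ, if_true, add_assoc]
  split_ifs <;> simp

theorem prod_weightedShift {g : G} (l : List (Matrix G G R))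
    (hl : ∀ M ∈ l, ∃ a, M = weightedShift g a) :
    ∃ a, l.prod = weightedShift (l.length • g) a := by
  induction l with
  | nil => exact ⟨1, by simp [weightedShift_zero]⟩
  | cons M l ih =>
    obtain ⟨a, rfl⟩ := hl M List.mem_cons_self
    obtain ⟨b, hb⟩ := ih fun M hM => hl M (List.mem_cons_of_mem _ hM)
    refine ⟨fun c => a c * b (c + g), ?_⟩
    rw [List.prod_cons, hb, weightedShift_mul_weightedShift, List.length_cons, succ_nsmul']

variable [StarRing R]

theorem weightedShift_mul_star (g : G) (a : G → R) :
    weightedShift g a * star (weightedShift g a) = diagonal fun c => a c * star (a c) := by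
  ext c d
  simp only [weightedShift, mul_apply, star_eq_conjTranspose, conjTranspose_apply, of_apply,
    diagonal_apply, apply_ite star, star_zero, ite_mul, zero_mul, mul_ite, mul_zero,
    Finset.sum_ite_eq', Finset.mem_univ, if_true, add_left_inj]
  split_ifs <;> simp_all

theorem star_mul_weightedShift (g : G) (a : G → R) :
    star (weightedShift g a) * weightedShift g a =
      diagonal fun c => star (a (c - g)) * a (c - g) := by
  have hsub : ∀ c e : G, c = e + g ↔ e = c - g := fun _ _ => eq_comm.trans eq_sub_iff_add_eq.symm
  ext c d
  rcases eq_or_ne c d with rfl | hcd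
  · simp [weightedShift, mul_apply, star_eq_conjTranspose, apply_ite star, hsub]
  · simp [weightedShift, mul_apply, star_eq_conjTranspose, apply_ite star, hsub, hcd, hcd.symm]

theorem sum_weightedShift_mul_star {ι : Type*} [Fintype ι] (g : G) (a : ι → G → R)
    (ha : ∀ c, ∑ i, a i c * star (a i c) = 1) :
    ∑ i, weightedShift g (a i) * star (weightedShift g (a i)) = 1 := by
  simp_rw [weightedShift_mul_star]
  exact sum_diagonal_eq_one _ ha

theorem sum_star_mul_weightedShift {ι : Type*} [Fintype ι] (g : G) (a : ι → G → R)
    (ha : ∀ c, ∑ i, star (a i c) * a i c = 1) :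
    ∑ i, star (weightedShift g (a i)) * weightedShift g (a i) = 1 := by
  simp_rw [star_mul_weightedShift]
  exact sum_diagonal_eq_one _ fun c => ha (c - g)

end WeightedShift

theorem sum_aCoord_mul_star (N K : ℕ) [NeZero K] (c : ZMod K) :
    ∑ i, aCoord N K i c * star (aCoord N K i c) = 1 := by
  ext z
  have hz : ((∑ i, ‖(z c).1 i‖ ^ 2 : ℝ) : ℂ) = 1 := by rw [(z c).2, Complex.ofReal_one]
  simpa [aCoord, RCLike.star_def, RCLike.mul_conj] using hz

theorem sum_star_aCoord_mul (N K : ℕ) [NeZero K] (c : ZMod K) :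
    ∑ i, star (aCoord N K i c) * aCoord N K i c = 1 := by
  simpa only [mul_comm (star _)] using sum_aCoord_mul_star N K c

theorem Zmat_eq_weightedShift (N K : ℕ) [NeZero K] (i : Fin N) :
    Zmat N K i = weightedShift 1 (aCoord N K i) :=
  rfl

theorem prod_ofFn_Zmat_eq_diagonal (N K : ℕ) [NeZero K] (idx : Fin K → Fin N) :
    ∃ d, (List.ofFn fun c => Zmat N K (idx c)).prod = diagonal d := by
  obtain ⟨d, hd⟩ := prod_weightedShift (g := (1 : ZMod K)) (List.ofFn fun c => Zmat N K (idx c))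
    (by simp [Zmat_eq_weightedShift])
  refine ⟨d, ?_⟩
  rwa [List.length_ofFn, nsmul_one, ZMod.natCast_self, weightedShift_zero] at hd

theorem stmt_9_general (N K : ℕ) [NeZero K] :
    (∑ i, Zmat N K i * star (Zmat N K i) = 1) ∧
    (∑ i, star (Zmat N K i) * Zmat N K i = 1) ∧
    (∀ idx jdx : Fin K → Fin N,
      Commute ((List.ofFn fun c => Zmat N K (idx c)).prod)
        ((List.ofFn fun c => Zmat N K (jdx c)).prod) ∧
      Commute ((List.ofFn fun c => Zmat N K (idx c)).prod)
        (star ((List.ofFn fun c => Zmat N K (jdx c)).prod))) := by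
  refine ⟨sum_weightedShift_mul_star 1 _ (sum_aCoord_mul_star N K),
    sum_star_mul_weightedShift 1 _ (sum_star_aCoord_mul N K), fun idx jdx => ?_⟩
  obtain ⟨d, hd⟩ := prod_ofFn_Zmat_eq_diagonal N K idx
  obtain ⟨e, he⟩ := prod_ofFn_Zmat_eq_diagonal N K jdx
  rw [hd, he, star_eq_conjTranspose, diagonal_conjTranspose]
  exact ⟨commute_diagonal d e, commute_diagonal d _⟩

/-- the matrices `Z₁,…,Z_N` satisfy the sphere relations and the
`K`-commutation relations defining the `K`-half-liberated complex sphere, giving a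
`K×K` matrix model. -/
theorem stmt_9 (N K : ℕ) [NeZero K] (hN : 1 ≤ N) (hK : 1 ≤ K) :
    (∑ i, Zmat N K i * star (Zmat N K i) = 1) ∧
    (∑ i, star (Zmat N K i) * Zmat N K i = 1) ∧
    (∀ idx jdx : Fin K → Fin N,
      Commute ((List.ofFn fun c => Zmat N K (idx c)).prod)
        ((List.ofFn fun c => Zmat N K (jdx c)).prod) ∧
      Commute ((List.ofFn fun c => Zmat N K (idx c)).prod)
        (star ((List.ofFn fun c => Zmat N K (jdx c)).prod))) :=
  stmt_9_general N K
end

section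
/- Let K ≥ 1, let A be a unital star ring, and let z_1,…,z_N ∈ A satisfy the sphere relations Σ_{i=1}^N z_i z_i* = 1 = Σ_{i=1}^N z_i* z_i together with the K-commutation relations: for all (i_1,…,i_K), (j_1,…,j_K) ∈ {1,…,N}^K, z_{i_1}⋯z_{i_K} commutes with z_{j_1}⋯z_{j_K} and with z_{j_1}*⋯z_{j_K}*. Then for all indices i_1,…,i_K: Σ_{i=1}^N z_i (z_{i_1}⋯z_{i_K}) z_i* = z_{i_K} z_{i_1}⋯z_{i_{K−1}}, and Σ_{i=1}^N z_i (z_{i_K}*⋯z_{i_1}*) z_i* = z_{i_{K−1}}*⋯z_{i_1}* z_{i_K}*. -/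
/-!
Insert `1 = ∑_w z_w z_w*`, the sum running over all words `w` of length `K - 1`. In
`z_t (z_{i₁}⋯z_{i_K}) z_w z_w* z_t*`, the factor `z_t z_{i₁}⋯z_{i_{K-1}}` is a word of length `K`,
and so are `z_{i_K} z_w` and `z_w* z_t*` (the latter in the adjoints); by `K`-commutation it can be
moved to the right end. Summing over `t` produces `∑_t z_t* z_t = 1`, and then summing over `w`
produces `∑_w z_w z_w* = 1`. The second identity is the adjoint of the first.
-/

open Finset

theorem star_list_prod {M : Type*} [Monoid M] [StarMul M] (l : List M) :
    star l.prod = (l.map star).reverse.prod :=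
  unop_map_list_prod (starMulEquiv : M ≃* Mᵐᵒᵖ) l

theorem star_prod_map {M ι : Type*} [Monoid M] [StarMul M] (z : ι → M) (l : List ι) :
    star (l.map z).prod = (l.reverse.map fun j => star (z j)).prod := by
  simp [star_list_prod, List.map_reverse, Function.comp_def]

section

variable {R ι : Type*} [Semiring R] [Fintype ι]

theorem sum_prod_ofFn_mul_star_eq_one [StarMul R] (z : ι → R)
    (h : ∑ i, z i * star (z i) = 1) (n : ℕ) :
    ∑ w : Fin n → ι, ((List.ofFn w).map z).prod * star ((List.ofFn w).map z).prod = 1 := by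
  induction n with
  | zero => simp
  | succ n ih =>
    rw [← (Fin.consEquiv fun _ => ι).sum_comp, Fintype.sum_prod_type]
    simp only [Fin.consEquiv_apply, List.ofFn_succ, Fin.cons_zero, Fin.cons_succ, List.map_cons,
      List.prod_cons, star_mul]
    calc ∑ t, ∑ w : Fin n → ι,
          z t * ((List.ofFn w).map z).prod * (star ((List.ofFn w).map z).prod * star (z t))
        = ∑ t, z t * (∑ w : Fin n → ι,
            ((List.ofFn w).map z).prod * star ((List.ofFn w).map z).prod) * star (z t) := by
          simp only [mul_sum, sum_mul, mul_assoc]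
      _ = 1 := by rw [ih]; simpa using h

theorem sum_mul_mul_star_eq_of_commute [Star R] {κ : Type*} [Fintype κ] (z : ι → R) (u : κ → R)
    (p b : R) (hu : ∑ w, u w * star (u w) = 1) (hz : ∑ t, star (z t) * z t = 1)
    (hcomm : ∀ t w, Commute (z t * p) (b * u w) ∧ Commute (z t * p) (star (u w) * star (z t))) :
    ∑ t, z t * (p * b) * star (z t) = b * p := by
  calc ∑ t, z t * (p * b) * star (z t)
      = ∑ t, ∑ w, (z t * p) * ((b * u w) * (star (u w) * star (z t))) := by
        refine sum_congr rfl fun t _ => ?_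
        simp only [← mul_assoc, ← sum_mul]
        simp only [mul_assoc, ← mul_sum, hu, mul_one]
    _ = ∑ t, ∑ w, ((b * u w) * (star (u w) * star (z t))) * (z t * p) := by
        refine sum_congr rfl fun t _ => sum_congr rfl fun w _ => ?_
        exact ((hcomm t w).1.mul_right (hcomm t w).2).eq
    _ = ∑ w, b * (u w * star (u w)) * (∑ t, star (z t) * z t) * p := by
        rw [sum_comm]
        simp only [mul_sum, sum_mul, mul_assoc]
    _ = b * p := by
        simp only [hz, mul_one, ← sum_mul, ← mul_sum, hu]

end

theorem stmt_10_general {A : Type*} [Ring A] [StarRing A] {N : ℕ} (K : ℕ)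
    (z : Fin N → A)
    (h1 : ∑ i, z i * star (z i) = 1)
    (h2 : ∑ i, star (z i) * z i = 1)
    (hcomm : ∀ l m : List (Fin N), l.length = K → m.length = K →
      Commute ((l.map z).prod) ((m.map z).prod) ∧
      Commute ((l.map z).prod) ((m.map fun j => star (z j)).prod)) :
    ∀ (l : List (Fin N)) (a : Fin N), l.length + 1 = K →
      (∑ t, z t * ((l.map z).prod * z a) * star (z t) = z a * (l.map z).prod) ∧
      (∑ t, z t * (star (z a) * star ((l.map z).prod)) * star (z t)
          = star ((l.map z).prod) * star (z a)) := by
  intro l a hl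
  have hword : ∀ (t : Fin N) (w : Fin l.length → Fin N),
      Commute (z t * (l.map z).prod) (z a * ((List.ofFn w).map z).prod) ∧
      Commute (z t * (l.map z).prod) (star ((List.ofFn w).map z).prod * star (z t)) := by
    intro t w
    have hlen : (t :: l).length = K := by simpa using hl
    refine ⟨(hcomm (t :: l) (a :: List.ofFn w) hlen (by simpa using hl)).1, ?_⟩
    have hstar : star ((List.ofFn w).map z).prod * star (z t)
        = ((t :: List.ofFn w).reverse.map fun j => star (z j)).prod := by
      rw [← star_mul, ← star_prod_map, List.map_cons, List.prod_cons]
    rw [hstar]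
    exact (hcomm (t :: l) (t :: List.ofFn w).reverse hlen (by simpa using hl)).2
  have hconj := sum_mul_mul_star_eq_of_commute z _ _ _
    (sum_prod_ofFn_mul_star_eq_one z h1 l.length) h2 hword
  refine ⟨hconj, ?_⟩
  simpa [star_sum, mul_assoc] using congrArg star hconj

/-- In a unital star ring, if `z₁,…,z_N` satisfy the sphere relations and
the `K`-commutation relations, then for all indices `i₁,…,i_K` (encoded as a list `l`
of length `K-1` followed by a last index `a`):
`Σ_t z_t (z_{i₁}⋯z_{i_K}) z_t* = z_{i_K} z_{i₁}⋯z_{i_{K-1}}` and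
`Σ_t z_t (z_{i_K}*⋯z_{i₁}*) z_t* = z_{i_{K-1}}*⋯z_{i₁}* z_{i_K}*`. -/
theorem stmt_10 {A : Type*} [Ring A] [StarRing A] {N : ℕ} (K : ℕ) (hK : 1 ≤ K)
    (z : Fin N → A)
    (h1 : ∑ i, z i * star (z i) = 1)
    (h2 : ∑ i, star (z i) * z i = 1)
    (hcomm : ∀ l m : List (Fin N), l.length = K → m.length = K →
      Commute ((l.map z).prod) ((m.map z).prod) ∧
      Commute ((l.map z).prod) ((m.map fun j => star (z j)).prod)) :
    ∀ (l : List (Fin N)) (a : Fin N), l.length + 1 = K →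
      (∑ t, z t * ((l.map z).prod * z a) * star (z t) = z a * (l.map z).prod) ∧
      (∑ t, z t * (star (z a) * star ((l.map z).prod)) * star (z t)
          = star ((l.map z).prod) * star (z a)) :=
  stmt_10_general K z h1 h2 hcomm
end

section
/- Let A be a unital star ring and let u = (u_{ij}) be an N×N matrix with entries in A which is biunitary: Σ_k u_{ik} u_{jk}* = δ_{ij} = Σ_k u_{ik}* u_{jk} and Σ_k u_{ki} u_{kj}* = δ_{ij} = Σ_k u_{ki}* u_{kj} for all i, j. If u_{ij} u_{kl}* u_{pq} u_{rs}* = u_{pq} u_{rs}* u_{ij} u_{kl}* for all indices i, j, k, l, p, q, r, s, then u_{ij} u_{rs}* u_{tq} = u_{tq} u_{rs}* u_{ij} for all indices i, j, r, s, t, q. -/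
/-- For a biunitary matrix `u` over a unital star ring, if
`u_{ij} u_{kl}* u_{pq} u_{rs}* = u_{pq} u_{rs}* u_{ij} u_{kl}*` for all indices, then
`u_{ij} u_{rs}* u_{tq} = u_{tq} u_{rs}* u_{ij}` for all indices. -/
theorem stmt_12 {A : Type*} [Ring A] [StarRing A] {N : ℕ}
    (u : Fin N → Fin N → A)
    (h1 : ∀ i j, ∑ k, u i k * star (u j k) = if i = j then 1 else 0)
    (h2 : ∀ i j, ∑ k, star (u i k) * u j k = if i = j then 1 else 0)
    (h3 : ∀ i j, ∑ k, u k i * star (u k j) = if i = j then 1 else 0)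
    (h4 : ∀ i j, ∑ k, star (u k i) * u k j = if i = j then 1 else 0)
    (hcomm : ∀ i j k l p q r s : Fin N,
      u i j * star (u k l) * (u p q * star (u r s))
        = u p q * star (u r s) * (u i j * star (u k l))) :
    ∀ i j r s t q : Fin N,
      u i j * star (u r s) * u t q = u t q * star (u r s) * u i j := by
  -- Step 1: ∑ l, u p l * u r s* * (u i j * u k l*) = δ_{kp} (u i j * u r s*)
  have step1 : ∀ p r s i j k : Fin N,
      ∑ l, u p l * star (u r s) * (u i j * star (u k l))
        = (if k = p then (1:A) else 0) * (u i j * star (u r s)) := by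
    intro p r s i j k
    have e1 : ∑ l, u p l * star (u r s) * (u i j * star (u k l))
        = ∑ l, u i j * ((star (u k l) * u p l) * star (u r s)) := by
      refine Finset.sum_congr rfl fun l _ => ?_
      rw [← hcomm i j k l p l r s]
      noncomm_ring
    rw [e1, ← Finset.mul_sum, ← Finset.sum_mul, h2 k p]
    by_cases hkp : k = p <;> simp [hkp, mul_comm]
  -- Step 2: u r s* * (u i j * u k q*) = u k q* * (u i j * u r s*)
  have step2 : ∀ r s i j k q : Fin N,
      star (u r s) * (u i j * star (u k q))
        = star (u k q) * (u i j * star (u r s)) := by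
    intro r s i j k q
    have e1 : star (u r s) * (u i j * star (u k q))
        = ∑ l, (if q = l then (1:A) else 0) * (star (u r s) * (u i j * star (u k l))) := by
      simp
    have e2 : ∀ l, (if q = l then (1:A) else 0) * (star (u r s) * (u i j * star (u k l)))
        = ∑ p, star (u p q) * (u p l * star (u r s) * (u i j * star (u k l))) := by
      intro l
      rw [← h4 q l, Finset.sum_mul]
      refine Finset.sum_congr rfl fun p _ => ?_
      noncomm_ring
    calc star (u r s) * (u i j * star (u k q))
        = ∑ l, ∑ p, star (u p q) * (u p l * star (u r s) * (u i j * star (u k l))) := by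
          rw [e1]; exact Finset.sum_congr rfl fun l _ => e2 l
      _ = ∑ p, star (u p q) * ∑ l, u p l * star (u r s) * (u i j * star (u k l)) := by
          rw [Finset.sum_comm]
          exact Finset.sum_congr rfl fun p _ => (Finset.mul_sum _ _ _).symm
      _ = ∑ p, star (u p q) * ((if k = p then (1:A) else 0) * (u i j * star (u r s))) := by
          exact Finset.sum_congr rfl fun p _ => by rw [step1]
      _ = star (u k q) * (u i j * star (u r s)) := by simp
  intro i j r s t q
  have h := congrArg star (step2 t q r s i j)
  simp only [star_mul, star_star, mul_assoc] at h
  simpa [mul_assoc] using h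
end

section
/- Let K ≥ 1, N ≥ 1, and let ξ_0,…,ξ_{K−1} ∈ ℂ be pairwise distinct with |ξ_c| = 1 for all c. Define A, B ∈ M_K(ℂ) (rows and columns indexed by ℤ/Kℤ) by A_{c,d} = 1/√N if d = c+1 and 0 otherwise, and B_{c,d} = ξ_c/√N if d = c+1 and 0 otherwise. Then every matrix M ∈ M_K(ℂ) satisfying MA = AM and MB = BM is a scalar multiple of the identity matrix. (Hence the K×K matrix representation ρ_x of the K-half-liberated sphere algebra determined by these matrices is irreducible.) -/
/-- Let `ξ_0,…,ξ_{K-1}` be pairwise distinct unimodular complex numbers,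
and let `A, B ∈ M_K(ℂ)` (indexed by `ℤ/K`) be the cyclic-shift matrices with
`A_{c,c+1} = 1/√N` and `B_{c,c+1} = ξ_c/√N`, all other entries `0`. Then any matrix
commuting with both `A` and `B` is a scalar multiple of the identity. -/
theorem stmt_13 (K N : ℕ) [NeZero K] (hK : 1 ≤ K) (hN : 1 ≤ N)
    (ξ : ZMod K → ℂ) (hdist : Function.Injective ξ) (hnorm : ∀ c, ‖ξ c‖ = 1)
    (A B : Matrix (ZMod K) (ZMod K) ℂ)
    (hA : A = Matrix.of fun c d => if d = c + 1 then 1 / ((Real.sqrt N : ℝ) : ℂ) else 0)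
    (hB : B = Matrix.of fun c d => if d = c + 1 then ξ c / ((Real.sqrt N : ℝ) : ℂ) else 0) :
    ∀ M : Matrix (ZMod K) (ZMod K) ℂ, M * A = A * M → M * B = B * M →
      ∃ a : ℂ, M = a • (1 : Matrix (ZMod K) (ZMod K) ℂ) := by
  intro M h1 h2
  set s : ℂ := ((Real.sqrt N : ℝ) : ℂ) with hs
  have hs0 : s ≠ 0 := by
    have hpos : (0:ℝ) < Real.sqrt N := Real.sqrt_pos.2 (by exact_mod_cast hN)
    exact Complex.ofReal_ne_zero.2 (ne_of_gt hpos)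
  have e1 : ∀ d e : ZMod K, (d = e + 1) = (e = d - 1) := by
    intro d e
    apply propext
    constructor
    · rintro rfl; ring
    · rintro rfl; ring
  have key1 : ∀ c d : ZMod K, M c (d - 1) = M (c + 1) d := by
    intro c d
    have h := congrFun (congrFun h1 c) d
    simp only [hA, Matrix.mul_apply, Matrix.of_apply, mul_ite, ite_mul, mul_zero, zero_mul] at h
    simp only [e1 d] at h
    rw [Finset.sum_ite_eq' Finset.univ (d-1) (fun e => M c e * (1/s)),
        Finset.sum_ite_eq' Finset.univ (c+1) (fun e => (1/s) * M e d)] at h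
    simp only [Finset.mem_univ, if_true] at h
    field_simp at h
    exact h
  have key2 : ∀ c d : ZMod K, M c (d - 1) * ξ (d - 1) = ξ c * M (c + 1) d := by
    intro c d
    have h := congrFun (congrFun h2 c) d
    simp only [hB, Matrix.mul_apply, Matrix.of_apply, mul_ite, ite_mul, mul_zero, zero_mul] at h
    simp only [e1 d] at h
    rw [Finset.sum_ite_eq' Finset.univ (d-1) (fun e => M c e * (ξ e/s)),
        Finset.sum_ite_eq' Finset.univ (c+1) (fun e => (ξ c/s) * M e d)] at h
    simp only [Finset.mem_univ, if_true] at h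
    rw [div_eq_mul_inv, div_eq_mul_inv] at h
    field_simp at h
    linear_combination h
  have off : ∀ c d : ZMod K, c ≠ d → M c d = 0 := by
    intro c d hcd
    have k1 := key1 (c - 1) d
    have k2 := key2 (c - 1) d
    rw [k1] at k2
    simp only [sub_add_cancel] at k1 k2
    have hne : ξ (d - 1) ≠ ξ (c - 1) := by
      intro h
      exact hcd (by have := sub_left_inj.mp (hdist h); exact this.symm)
    have : M c d * (ξ (d - 1) - ξ (c - 1)) = 0 := by linear_combination k2
    rcases mul_eq_zero.mp this with h | h
    · exact h
    · exact absurd (sub_eq_zero.mp h) hne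
  have diag : ∀ c : ZMod K, M c c = M (c + 1) (c + 1) := by
    intro c
    have := key1 c (c + 1)
    simpa using this
  have diagn : ∀ n : ℕ, M (n : ZMod K) (n : ZMod K) = M 0 0 := by
    intro n
    induction n with
    | zero => simp
    | succ n ih => push_cast; rw [← diag]; exact ih
  refine ⟨M 0 0, ?_⟩
  ext c d
  by_cases hcd : c = d
  · subst hcd
    have : M c c = M 0 0 := by
      have := diagn c.val
      rwa [ZMod.natCast_val, ZMod.cast_id] at this
    simp [Matrix.one_apply, this]
  · simp [Matrix.one_apply, hcd, off c d hcd]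
end

section
/- Let K ≥ 3 be odd, let A be a unital star ring, and let z_1,…,z_N ∈ A be self-adjoint elements (z_i* = z_i) with Σ_{i=1}^N z_i² = 1, such that all length-K products pairwise commute: z_{i_1}⋯z_{i_K} · z_{j_1}⋯z_{j_K} = z_{j_1}⋯z_{j_K} · z_{i_1}⋯z_{i_K} for all index tuples. Then the z_i pairwise commute: z_i z_j = z_j z_i for all i, j. (Hence for odd K the real K-half-liberated sphere coincides with the classical real sphere.) -/
/-!
Since `∑ zₖ² = 1` and `K = 2t + 1`, each `zᵢ = zᵢ (∑ zₖ²)ᵗ` is a sum of words of length `K`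
in the `zₖ`. Such words commute pairwise by hypothesis, hence so do their sums.
-/

open scoped Pointwise

theorem Set.mem_range_pow_iff {M ι : Type*} [Monoid M] {z : ι → M} {n : ℕ} {a : M} :
    a ∈ Set.range z ^ n ↔ ∃ l : List ι, l.length = n ∧ (l.map z).prod = a := by
  induction n generalizing a with
  | zero => simp [eq_comm]
  | succ n ih =>
    simp only [pow_succ', Set.mem_mul, ih, Set.exists_range_iff, List.length_eq_succ_iff]
    constructor
    · rintro ⟨i, _, ⟨l, rfl, rfl⟩, rfl⟩
      exact ⟨i :: l, ⟨i, l, rfl, rfl⟩, by simp⟩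
    · rintro ⟨_, ⟨i, l, rfl, rfl⟩, rfl⟩
      exact ⟨i, _, ⟨l, rfl, rfl⟩, by simp⟩

theorem AddSubmonoid.commute_of_mem_closure {R : Type*} [NonUnitalNonAssocSemiring R]
    {s : Set R} (hs : ∀ a ∈ s, ∀ b ∈ s, Commute a b) {a b : R}
    (ha : a ∈ closure s) (hb : b ∈ closure s) : Commute a b := by
  induction ha using closure_induction with
  | mem x hx =>
    induction hb using closure_induction with
    | mem y hy => exact hs x hx y hy
    | zero => exact Commute.zero_right x
    | add _ _ _ _ h₁ h₂ => exact h₁.add_right h₂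
  | zero => exact Commute.zero_left b
  | add _ _ _ _ h₁ h₂ => exact h₁.add_left h₂

theorem stmt_15_general {A : Type*} [Ring A] {N : ℕ} (K : ℕ)
    (hodd : Odd K)
    (z : Fin N → A)
    (hsum : ∑ i, z i * z i = 1)
    (hcomm : ∀ l m : List (Fin N), l.length = K → m.length = K →
      (l.map z).prod * (m.map z).prod = (m.map z).prod * (l.map z).prod) :
    ∀ i j, z i * z j = z j * z i := by
  obtain ⟨t, rfl⟩ := hodd
  set M := AddSubmonoid.closure (Set.range z)
  have hz (i : Fin N) : z i ∈ M := AddSubmonoid.subset_closure ⟨i, rfl⟩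
  have hsq : ∑ i, z i * z i ∈ M ^ 2 :=
    pow_two M ▸ sum_mem fun i _ ↦ AddSubmonoid.mul_mem_mul (hz i) (hz i)
  have hone : (1 : A) ∈ M ^ (2 * t) := by
    rw [pow_mul, ← one_pow t, ← hsum]
    exact AddSubmonoid.pow_subset_pow (Set.pow_mem_pow hsq)
  have hzK (i : Fin N) : z i ∈ AddSubmonoid.closure (Set.range z ^ (2 * t + 1)) := by
    rw [← AddSubmonoid.closure_pow, pow_succ', ← mul_one (z i)]
    exact AddSubmonoid.mul_mem_mul (hz i) hone
  intro i j
  refine AddSubmonoid.commute_of_mem_closure ?_ (hzK i) (hzK j)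
  intro a ha b hb
  obtain ⟨l, hl, rfl⟩ := Set.mem_range_pow_iff.mp ha
  obtain ⟨m, hm, rfl⟩ := Set.mem_range_pow_iff.mp hb
  exact hcomm l m hl hm

/-- Let `K ≥ 3` be odd and let `z₁,…,z_N` be self-adjoint elements of a
unital star ring with `Σ zᵢ² = 1`, such that all length-`K` products in the `zᵢ`
pairwise commute. Then the `zᵢ` pairwise commute. -/
theorem stmt_15 {A : Type*} [Ring A] [StarRing A] {N : ℕ} (K : ℕ)
    (hK : 3 ≤ K) (hodd : Odd K)
    (z : Fin N → A)
    (hsa : ∀ i, star (z i) = z i)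
    (hsum : ∑ i, z i * z i = 1)
    (hcomm : ∀ l m : List (Fin N), l.length = K → m.length = K →
      (l.map z).prod * (m.map z).prod = (m.map z).prod * (l.map z).prod) :
    ∀ i j, z i * z j = z j * z i :=
  stmt_15_general K hodd z hsum hcomm
end

section
/- Let K ≥ 2 be even, let A be a unital star ring, and let z_1,…,z_N ∈ A be self-adjoint elements (z_i* = z_i) with Σ_{i=1}^N z_i² = 1, such that all length-K products pairwise commute: z_{i_1}⋯z_{i_K} · z_{j_1}⋯z_{j_K} = z_{j_1}⋯z_{j_K} · z_{i_1}⋯z_{i_K} for all index tuples. Then the half-liberation relations hold: z_a z_b z_c = z_c z_b z_a for all a, b, c ∈ {1,…,N}. (Hence for even K the real K-half-liberated sphere coincides with the half-liberated real sphere S^{N−1}_{ℝ,*}.) -/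
private lemma stmt16_step {A : Type*} [Ring A] {N : ℕ} (z : Fin N → A)
    (hsum : ∑ i, z i * z i = 1) (K : ℕ)
    (h : ∀ l m : List (Fin N), l.length = K + 2 → m.length = K + 2 →
      (l.map z).prod * (m.map z).prod = (m.map z).prod * (l.map z).prod) :
    ∀ l m : List (Fin N), l.length = K → m.length = K →
      (l.map z).prod * (m.map z).prod = (m.map z).prod * (l.map z).prod := by
  intro l m hl hm
  have key : ∀ (i j : Fin N),
      ((l.map z).prod * (z i * z i)) * ((m.map z).prod * (z j * z j))
      = ((m.map z).prod * (z j * z j)) * ((l.map z).prod * (z i * z i)) := by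
    intro i j
    have := h (l ++ [i, i]) (m ++ [j, j]) (by simp [hl]) (by simp [hm])
    simpa [List.prod_append, mul_assoc] using this
  calc (l.map z).prod * (m.map z).prod
      = ((l.map z).prod * ∑ i, z i * z i) * ((m.map z).prod * ∑ j, z j * z j) := by
        simp [hsum]
    _ = ∑ i, ∑ j, ((l.map z).prod * (z i * z i)) * ((m.map z).prod * (z j * z j)) := by
        simp_rw [Finset.mul_sum, Finset.sum_mul]
        exact Finset.sum_comm
    _ = ∑ i, ∑ j, ((m.map z).prod * (z j * z j)) * ((l.map z).prod * (z i * z i)) := by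
        simp_rw [key]
    _ = ∑ j, ∑ i, ((m.map z).prod * (z j * z j)) * ((l.map z).prod * (z i * z i)) := by
        rw [Finset.sum_comm]
    _ = ((m.map z).prod * ∑ j, z j * z j) * ((l.map z).prod * ∑ i, z i * z i) := by
        simp_rw [Finset.mul_sum, Finset.sum_mul]
        exact Finset.sum_comm
    _ = (m.map z).prod * (l.map z).prod := by simp [hsum]

private lemma stmt16_reduce {A : Type*} [Ring A] {N : ℕ} (z : Fin N → A)
    (hsum : ∑ i, z i * z i = 1) : ∀ t : ℕ,
    (∀ l m : List (Fin N), l.length = 2 + 2 * t → m.length = 2 + 2 * t →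
      (l.map z).prod * (m.map z).prod = (m.map z).prod * (l.map z).prod) →
    (∀ l m : List (Fin N), l.length = 2 → m.length = 2 →
      (l.map z).prod * (m.map z).prod = (m.map z).prod * (l.map z).prod) := by
  intro t
  induction t with
  | zero => intro h; simpa using h
  | succ n ih =>
    intro h
    apply ih
    have := stmt16_step z hsum (2 + 2 * n) (by
      intro l m hl hm
      exact h l m (by omega) (by omega))
    exact this

/-- Let `K ≥ 2` be even and let `z₁,…,z_N` be self-adjoint elements of a
unital star ring with `Σ zᵢ² = 1`, such that all length-`K` products in the `zᵢ`
pairwise commute. Then the half-liberation relations `z_a z_b z_c = z_c z_b z_a` hold. -/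
theorem stmt_16 {A : Type*} [Ring A] [StarRing A] {N : ℕ} (K : ℕ)
    (hK : 2 ≤ K) (heven : Even K)
    (z : Fin N → A)
    (hsa : ∀ i, star (z i) = z i)
    (hsum : ∑ i, z i * z i = 1)
    (hcomm : ∀ l m : List (Fin N), l.length = K → m.length = K →
      (l.map z).prod * (m.map z).prod = (m.map z).prod * (l.map z).prod) :
    ∀ a b c, z a * z b * z c = z c * z b * z a := by
  obtain ⟨s, hs⟩ := heven
  obtain ⟨t, ht⟩ : ∃ t, K = 2 + 2 * t := ⟨s - 1, by omega⟩
  have h2 : ∀ l m : List (Fin N), l.length = 2 → m.length = 2 →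
      (l.map z).prod * (m.map z).prod = (m.map z).prod * (l.map z).prod :=
    stmt16_reduce z hsum t (fun l m hl hm => hcomm l m (by omega) (by omega))
  have hp : ∀ a b c d : Fin N,
      (z a * z b) * (z c * z d) = (z c * z d) * (z a * z b) := by
    intro a b c d
    simpa [mul_assoc] using h2 [a, b] [c, d] rfl rfl
  intro a b c
  calc z a * z b * z c
      = z a * z b * z c * ∑ i, z i * z i := by rw [hsum, mul_one]
    _ = ∑ i, (z a * z b) * (z c * z i) * z i := by
        rw [Finset.mul_sum]
        exact Finset.sum_congr rfl fun i _ => by simp [mul_assoc]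
    _ = ∑ i, z c * ((z i * z a) * (z b * z i)) := by
        refine Finset.sum_congr rfl fun i _ => ?_
        rw [hp a b c i]
        simp [mul_assoc]
    _ = ∑ i, z c * ((z b * z i) * (z i * z a)) := by
        simp_rw [hp]
    _ = ∑ i, z c * z b * (z i * z i) * z a :=
        Finset.sum_congr rfl fun i _ => by simp [mul_assoc]
    _ = z c * z b * z a := by
        rw [← Finset.sum_mul, ← Finset.mul_sum, hsum, mul_one]
end
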